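/- (Sufficiency of a power-law Pareto frontier for first-order collapse.) Let 𝓛 : (0,∞) × (0,∞) → (0,∞) be continuously differentiable in its first argument (compute c) for each model size p. Let P ⊆ (0,∞) be nonempty, c* : P → (0,∞) a map whose image is contained in an open interval I ⊆ (0,∞), and suppose there exist a > 0, δ ∈ ℝ such that the function 𝓛*(c) = a·c^(−δ) satisfies 𝓛*(c) ≤ 𝓛(c,p) for all c ∈ I, p ∈ P, with equality 𝓛*(c*(p)) = 𝓛(c*(p), p) for every p ∈ P. Define ℓ(x,p) = 𝓛(x·c*(p), p)/𝓛(c*(p), p). Then for every p ∈ P, the derivative of x ↦ ℓ(x,p) at x = 1 equals −δ; i.e., all normalized curves share the same first-order behavior at x = 1, independent of p. -/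

import Mathlib

/-!
At `c*(p)` the curve `c ↦ 𝓛(c,p)` touches the frontier `a·c^(-δ)` from above inside the open set
`I`, so the two have the same derivative there. The derivative of the normalized curve at `x = 1`
is the elasticity `c·𝓛'(c)/𝓛(c)` at `c = c*(p)`, which therefore equals the elasticity of the power
law, namely `-δ`.
-/

open Filter Topology

theorem HasDerivAt.eq_of_eventually_le_of_eq {f g : ℝ → ℝ} {f' g' x : ℝ}
    (hf : HasDerivAt f f' x) (hg : HasDerivAt g g' x)
    (hle : ∀ᶠ y in 𝓝 x, g y ≤ f y) (heq : g x = f x) : f' = g' := by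
  have hmin : IsLocalMin (fun y => f y - g y) x := by
    filter_upwards [hle] with y hy
    linarith
  linarith [hmin.hasDerivAt_eq_zero (hf.sub hg)]

theorem HasDerivAt.div_apply_comp_mul_at_one {f : ℝ → ℝ} {f' c : ℝ} (hf : HasDerivAt f f' c) :
    HasDerivAt (fun x => f (x * c) / f c) (c * f' / f c) 1 := by
  have hscale : HasDerivAt (fun x : ℝ => x * c) c 1 := by
    simpa using (hasDerivAt_id (1 : ℝ)).mul_const c
  have hf1 : HasDerivAt f f' (1 * c) := by rwa [one_mul]
  simpa [mul_comm] using (hf1.comp 1 hscale).div_const (f c)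

theorem mul_deriv_rpow_div_rpow {a c : ℝ} (ha : a ≠ 0) (hc : 0 < c) (δ : ℝ) :
    c * (a * (-δ * c ^ (-δ - 1))) / (a * c ^ (-δ)) = -δ := by
  have hpow : c ^ (-δ) ≠ 0 := (Real.rpow_pos_of_pos hc _).ne'
  rw [Real.rpow_sub_one hc.ne']
  field_simp

theorem stmt_5_general
    (𝓛 : ℝ → ℝ → ℝ)
    (hC1 : ∀ p : ℝ, 0 < p → ContDiffOn ℝ 1 (fun c => 𝓛 c p) (Set.Ioi 0))
    (P : Set ℝ) (hP : P ⊆ Set.Ioi 0)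
    (cstar : ℝ → ℝ)
    (I : Set ℝ) (hIopen : IsOpen I) (hIpos : I ⊆ Set.Ioi 0)
    (himage : ∀ p ∈ P, cstar p ∈ I)
    (a δ : ℝ) (ha : 0 < a)
    (hlower : ∀ c ∈ I, ∀ p ∈ P, a * c ^ (-δ) ≤ 𝓛 c p)
    (htangent : ∀ p ∈ P, a * (cstar p) ^ (-δ) = 𝓛 (cstar p) p)
    (ℓ : ℝ → ℝ → ℝ)
    (hℓ : ∀ x p : ℝ, ℓ x p = 𝓛 (x * cstar p) p / 𝓛 (cstar p) p) :
    ∀ p ∈ P, HasDerivAt (fun x => ℓ x p) (-δ) 1 := by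
  intro p hp
  have hcI : cstar p ∈ I := himage p hp
  have hc : 0 < cstar p := hIpos hcI
  have hL : HasDerivAt (fun c => 𝓛 c p) (deriv (fun c => 𝓛 c p) (cstar p)) (cstar p) :=
    (((hC1 p (hP hp)).differentiableOn one_ne_zero).differentiableAt
      (Ioi_mem_nhds hc)).hasDerivAt
  have hfrontier : HasDerivAt (fun c : ℝ => a * c ^ (-δ))
      (a * (-δ * cstar p ^ (-δ - 1))) (cstar p) :=
    (Real.hasDerivAt_rpow_const (Or.inl hc.ne')).const_mul a
  have hslope := hL.eq_of_eventually_le_of_eq hfrontier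
    (eventually_of_mem (hIopen.mem_nhds hcI) fun c hcI' => hlower c hcI' p hp) (htangent p hp)
  have helasticity : cstar p * deriv (fun c => 𝓛 c p) (cstar p) / 𝓛 (cstar p) p = -δ := by
    rw [hslope, ← htangent p hp, mul_deriv_rpow_div_rpow ha.ne' hc]
  simpa only [hℓ, helasticity] using hL.div_apply_comp_mul_at_one

/-- **Sufficiency of a power-law Pareto frontier for first-order collapse.**
If the power law `𝓛*(c) = a·c^(−δ)` lower-bounds the loss curves `𝓛(c,p)` on an open
interval `I` containing the image of the compute-optimal map `c*`, with tangency
`𝓛*(c*(p)) = 𝓛(c*(p),p)`, then each normalized curve `x ↦ ℓ(x,p) = 𝓛(x·c*(p),p)/𝓛(c*(p),p)`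
has derivative `−δ` at `x = 1`, independent of `p`. -/
theorem stmt_5
    (𝓛 : ℝ → ℝ → ℝ)
    (hpos : ∀ c p : ℝ, 0 < c → 0 < p → 0 < 𝓛 c p)
    (hC1 : ∀ p : ℝ, 0 < p → ContDiffOn ℝ 1 (fun c => 𝓛 c p) (Set.Ioi 0))
    (P : Set ℝ) (hPne : P.Nonempty) (hP : P ⊆ Set.Ioi 0)
    (cstar : ℝ → ℝ) (hcstar : ∀ p ∈ P, 0 < cstar p)
    (I : Set ℝ) (hIopen : IsOpen I) (hIconn : I.OrdConnected) (hIpos : I ⊆ Set.Ioi 0)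
    (himage : ∀ p ∈ P, cstar p ∈ I)
    (a δ : ℝ) (ha : 0 < a)
    (hlower : ∀ c ∈ I, ∀ p ∈ P, a * c ^ (-δ) ≤ 𝓛 c p)
    (htangent : ∀ p ∈ P, a * (cstar p) ^ (-δ) = 𝓛 (cstar p) p)
    (ℓ : ℝ → ℝ → ℝ)
    (hℓ : ∀ x p : ℝ, ℓ x p = 𝓛 (x * cstar p) p / 𝓛 (cstar p) p) :
    ∀ p ∈ P, HasDerivAt (fun x => ℓ x p) (-δ) 1 :=
  stmt_5_general 𝓛 hC1 P hP cstar I hIopen hIpos himage a δ ha hlower htangent ℓ hℓ
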